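/- Suppose Conditions 1–2, 4–6 and Conditions 8–9 (sparse GLM propensity score with lasso-type rates for γ̂, and link derivative lower bound) hold with s_π = o(√n / log p), and let M_γ ≍ 1 be sufficiently large. Then with probability converging to 1, |X_i^⊤γ̂| ≤ M_γ for all i in the main sample and |X_{aux,i}^⊤γ̂| ≤ M_γ for all i in the auxiliary sample; consequently the trimming in the PS estimate is inactive, i.e. π̂_i = φ(X_i^⊤γ̂) and π̂_{aux,i} = φ(X_{aux,i}^⊤γ̂) for all i. -/

import Mathlib

open MeasureTheory ProbabilityTheory Filter
open scoped BigOperators ENNReal NNReal Topology Classical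

noncomputable section

namespace DCalATE

/-- Euclidean dot product on `ℝ^k`. -/
def dot {k : ℕ} (x y : Fin k → ℝ) : ℝ := ∑ j, x j * y j

/-- `ℓ¹` norm. -/
def l1 {k : ℕ} (v : Fin k → ℝ) : ℝ := ∑ j, |v j|

/-- squared `ℓ²` norm. -/
def l2sq {k : ℕ} (v : Fin k → ℝ) : ℝ := ∑ j, (v j) ^ 2

/-- `ℓ²` norm. -/
def l2 {k : ℕ} (v : Fin k → ℝ) : ℝ := Real.sqrt (l2sq v)

/-- `ℓ⁰` "norm": number of nonzero coordinates (sparsity). -/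
def sparsity {k : ℕ} (v : Fin k → ℝ) : ℕ := (Finset.univ.filter fun j => v j ≠ 0).card

/-- `clamp M t = t·1{|t| ≤ M} + sign(t)·M·1{|t| > M}`. -/
def clamp (M t : ℝ) : ℝ := min M (max (-M) t)

/-- zero-padding of a `p`-vector to a `(p ∨ n)`-vector. -/
def pad {p n : ℕ} (v : Fin p → ℝ) : Fin (max p n) → ℝ :=
  fun j => if h : (j : ℕ) < p then v ⟨j, h⟩ else 0

/-- All observed and estimated quantities at sample size `n`, ambient dimension `p`:
the main sample `(X, T, Y)` (with potential outcome `Y1 = Y(1)`), the auxiliary sample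
`(Xaux, Taux, Yaux)`, the training-sample estimates `bhat = β̂`, `ghat = γ̂`, and the
augmented covariates `Xt = X̃` of dimension `p ∨ n`. -/
structure Data (Ω : Type*) (p n : ℕ) where
  X : Ω → Fin n → Fin p → ℝ
  T : Ω → Fin n → ℝ
  Y : Ω → Fin n → ℝ
  Y1 : Ω → Fin n → ℝ
  Xaux : Ω → Fin n → Fin p → ℝ
  Taux : Ω → Fin n → ℝ
  Yaux : Ω → Fin n → ℝ
  bhat : Ω → Fin p → ℝ
  ghat : Ω → Fin p → ℝ
  Xt : Ω → Fin n → Fin (max p n) → ℝ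

variable {Ω : Type*} [MeasurableSpace Ω] {p n : ℕ}

/-- initial OR estimate `r̂_i = ψ(X_i^⊤β̂)` on the main sample. -/
def rh (ψ : ℝ → ℝ) (D : Data Ω p n) (ω : Ω) (i : Fin n) : ℝ :=
  ψ (dot (D.X ω i) (D.bhat ω))

/-- initial OR estimate on the auxiliary sample. -/
def rhAux (ψ : ℝ → ℝ) (D : Data Ω p n) (ω : Ω) (i : Fin n) : ℝ :=
  ψ (dot (D.Xaux ω i) (D.bhat ω))

/-- trimmed initial PS estimate `π̂_i` on the main sample. -/
def ph (φ : ℝ → ℝ) (Mγ : ℝ) (D : Data Ω p n) (ω : Ω) (i : Fin n) : ℝ :=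
  φ (clamp Mγ (dot (D.X ω i) (D.ghat ω)))

/-- trimmed initial PS estimate on the auxiliary sample. -/
def phAux (φ : ℝ → ℝ) (Mγ : ℝ) (D : Data Ω p n) (ω : Ω) (i : Fin n) : ℝ :=
  φ (clamp Mγ (dot (D.Xaux ω i) (D.ghat ω)))

/-- diagonal weight `Π_{ii} = φ'(X_i^⊤γ̂)/π̂_i` on the main sample. -/
def wgt (φ : ℝ → ℝ) (Mγ : ℝ) (D : Data Ω p n) (ω : Ω) (i : Fin n) : ℝ :=
  deriv φ (dot (D.X ω i) (D.ghat ω)) / ph φ Mγ D ω i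

/-- diagonal weight on the auxiliary sample. -/
def wgtAux (φ : ℝ → ℝ) (Mγ : ℝ) (D : Data Ω p n) (ω : Ω) (i : Fin n) : ℝ :=
  deriv φ (dot (D.Xaux ω i) (D.ghat ω)) / phAux φ Mγ D ω i

/-- `j`-th coordinate of the auxiliary balancing target `n_aux⁻¹ X_aux^⊤ Π_aux R̃_aux`. -/
def auxTarget (ψ φ : ℝ → ℝ) (Mγ : ℝ) (D : Data Ω p n) (ω : Ω) (j : Fin p) : ℝ :=
  (n : ℝ)⁻¹ * ∑ i, wgtAux φ Mγ D ω i *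
    (D.Taux ω i / phAux φ Mγ D ω i * (D.Yaux ω i - rhAux ψ D ω i)) * D.Xaux ω i j

/-- Feasibility for the OR-calibration program. -/
def ORFeas (ψ φ : ℝ → ℝ) (Mγ ηr Mr : ℝ) (D : Data Ω p n) (ω : Ω) (v : Fin n → ℝ) : Prop :=
  (∀ j, |auxTarget ψ φ Mγ D ω j - (n : ℝ)⁻¹ * ∑ i, wgt φ Mγ D ω i * v i * D.X ω i j| ≤ ηr) ∧
  ∀ i, |v i| ≤ Mr

/-- `v` solves the OR-calibration program: it is feasible and minimizes `n⁻¹‖·‖₂²`. -/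
def orSol (ψ φ : ℝ → ℝ) (Mγ ηr Mr : ℝ) (D : Data Ω p n) (ω : Ω) (v : Fin n → ℝ) : Prop :=
  ORFeas ψ φ Mγ ηr Mr D ω v ∧ ∀ v', ORFeas ψ φ Mγ ηr Mr D ω v' → l2sq v ≤ l2sq v'

/-- Feasibility for the PS-calibration program. -/
def PSFeas (ψ φ : ℝ → ℝ) (ηπ1 ηπ2 Mπ : ℝ) (D : Data Ω p n) (ω : Ω)
    (μh : Fin n → ℝ) (γ : Fin (max p n) → ℝ) : Prop :=
  (∀ j : Fin p,
    |(n : ℝ)⁻¹ * ∑ i, (D.T ω i / φ (dot (D.Xt ω i) γ) - 1) *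
        (deriv ψ (dot (D.X ω i) (D.bhat ω)) * D.X ω i j)|
      ≤ ηπ1 * l2 (fun i => deriv ψ (dot (D.X ω i) (D.bhat ω)) * D.X ω i j) / Real.sqrt n) ∧
  (|(n : ℝ)⁻¹ * ∑ i, (D.T ω i / φ (dot (D.Xt ω i) γ) - 1) * μh i|
      ≤ ηπ1 * l2 μh / Real.sqrt n) ∧
  (∀ j : Fin (max p n),
    |(n : ℝ)⁻¹ * ∑ i, (D.T ω i / φ (dot (D.Xt ω i) γ) - 1) * D.Xt ω i j|
      ≤ ηπ2 * l2 (fun i => D.Xt ω i j) / Real.sqrt n) ∧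
  (∀ i, D.T ω i / φ (dot (D.Xt ω i) γ) ≤ Mπ)

/-- `γt` solves the PS-calibration program: whenever the program is feasible, `γt` is feasible
and minimizes `‖γ - γ̂‖₁`; when it is infeasible, `γt` equals the zero-padded `γ̂`. -/
def psSol (ψ φ : ℝ → ℝ) (ηπ1 ηπ2 Mπ : ℝ) (D : Data Ω p n) (ω : Ω)
    (μh : Fin n → ℝ) (γt : Fin (max p n) → ℝ) : Prop :=
  ((∃ γ, PSFeas ψ φ ηπ1 ηπ2 Mπ D ω μh γ) →
      PSFeas ψ φ ηπ1 ηπ2 Mπ D ω μh γt ∧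
      ∀ γ', PSFeas ψ φ ηπ1 ηπ2 Mπ D ω μh γ' →
        l1 (fun j => γt j - pad (D.ghat ω) j) ≤ l1 (fun j => γ' j - pad (D.ghat ω) j)) ∧
  ((¬ ∃ γ, PSFeas ψ φ ηπ1 ηπ2 Mπ D ω μh γ) → γt = pad (D.ghat ω))

/-- calibrated OR value `r̃_i = r̂_i + μ̂_i`. -/
def rt (ψ : ℝ → ℝ) (D : Data Ω p n) (ω : Ω) (μh : Fin n → ℝ) (i : Fin n) : ℝ :=
  rh ψ D ω i + μh i

/-- calibrated PS value `π̃_i = φ(X̃_i^⊤γ̃)`. -/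
def pt (φ : ℝ → ℝ) (D : Data Ω p n) (ω : Ω) (γt : Fin (max p n) → ℝ) (i : Fin n) : ℝ :=
  φ (dot (D.Xt ω i) γt)

/-- the Doubly-Calibrated ATE estimator `τ̂_DCal`. -/
def tauDCal (ψ φ : ℝ → ℝ) (D : Data Ω p n) (ω : Ω) (μh : Fin n → ℝ)
    (γt : Fin (max p n) → ℝ) : ℝ :=
  (n : ℝ)⁻¹ * ∑ i, (D.T ω i * (D.Y ω i - rt ψ D ω μh i) / pt φ D ω γt i + rt ψ D ω μh i)

/-- the target `τ̄* = n⁻¹ Σ_i r*(X_i)`. -/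
def tauBar (rs : (Fin p → ℝ) → ℝ) (D : Data Ω p n) (ω : Ω) : ℝ :=
  (n : ℝ)⁻¹ * ∑ i, rs (D.X ω i)

section Conditions

variable (μ : Measure Ω)

/-- Basic sampling structure: binary treatments, consistency `Y = Y(1)` on `{T = 1}`,
i.i.d. observations within the main and auxiliary samples (equal in law), independence of the
main sample from the auxiliary/training information, identification of `π*` as the
propensity score and of `r*` as the outcome regression (`E[TY|X] = π*(X) r*(X)`),
and augmented covariates extending `X` by i.i.d. `Uniform[-1,1]` coordinates independent of
everything else. -/
def WellPosed (D : Data Ω p n) (πs rs : (Fin p → ℝ) → ℝ) : Prop :=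
  (∀ᵐ ω ∂μ, ∀ i, (D.T ω i = 0 ∨ D.T ω i = 1) ∧ (D.Taux ω i = 0 ∨ D.Taux ω i = 1)) ∧
  (∀ᵐ ω ∂μ, ∀ i, D.T ω i = 1 → D.Y ω i = D.Y1 ω i) ∧
  iIndepFun
    (fun i ω => (D.X ω i, D.T ω i, D.Y ω i, D.Y1 ω i)) μ ∧
  (∀ i j, IdentDistrib (fun ω => (D.X ω i, D.T ω i, D.Y ω i, D.Y1 ω i))
      (fun ω => (D.X ω j, D.T ω j, D.Y ω j, D.Y1 ω j)) μ μ) ∧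
  iIndepFun (fun i ω => (D.Xaux ω i, D.Taux ω i, D.Yaux ω i)) μ ∧
  (∀ i j, IdentDistrib (fun ω => (D.Xaux ω i, D.Taux ω i, D.Yaux ω i))
      (fun ω => (D.X ω j, D.T ω j, D.Y ω j)) μ μ) ∧
  IndepFun (fun ω => (D.X ω, D.T ω, D.Y ω, D.Y1 ω))
    (fun ω => (D.Xaux ω, D.Taux ω, D.Yaux ω, D.bhat ω, D.ghat ω)) μ ∧
  IndepFun (fun ω => (D.Xaux ω, D.Taux ω, D.Yaux ω)) (fun ω => (D.bhat ω, D.ghat ω)) μ ∧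
  (∀ i, μ[(fun ω => D.T ω i) | MeasurableSpace.comap (fun ω => D.X ω i) inferInstance]
      =ᵐ[μ] fun ω => πs (D.X ω i)) ∧
  (∀ i, μ[(fun ω => D.T ω i * D.Y ω i) |
        MeasurableSpace.comap (fun ω => D.X ω i) inferInstance]
      =ᵐ[μ] fun ω => πs (D.X ω i) * rs (D.X ω i)) ∧
  (∀ ω i (j : Fin p), D.Xt ω i (Fin.castLE (le_max_left p n) j) = D.X ω i j) ∧
  (∀ i (j : Fin (max p n)), p ≤ (j : ℕ) →
      Measure.map (fun ω => D.Xt ω i j) μ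
        = (2 : ℝ≥0∞)⁻¹ • (volume.restrict (Set.Icc (-1 : ℝ) 1))) ∧
  iIndepFun
    (fun (ij : Fin n × {j : Fin (max p n) // p ≤ (j : ℕ)}) ω => D.Xt ω ij.1 ij.2.1) μ ∧
  IndepFun (fun ω (ij : Fin n × {j : Fin (max p n) // p ≤ (j : ℕ)}) => D.Xt ω ij.1 ij.2.1)
    (fun ω => (D.X ω, D.T ω, D.Y ω, D.Y1 ω, D.Xaux ω, D.Taux ω, D.Yaux ω, D.bhat ω, D.ghat ω)) μ

variable [StandardBorelSpace Ω] [IsFiniteMeasure μ]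

/-- Condition 1 (unconfoundedness): `Y(1) ⟂ T | X` for each observation. -/
def Unconf (D : Data Ω p n) : Prop :=
  ∀ i, ∃ hle : MeasurableSpace.comap (fun ω => D.X ω i) inferInstance ≤ ‹MeasurableSpace Ω›,
    CondIndepFun (MeasurableSpace.comap (fun ω => D.X ω i) inferInstance) hle
      (fun ω => D.Y1 ω i) (fun ω => D.T ω i) μ

end Conditions

section Conditions2

variable (μ : Measure Ω)

/-- Condition 2 (overlap): `c_π < π*(X) < 1 - c_π` almost surely. -/
def Cond2 (cπ : ℝ) (D : Data Ω p n) (πs : (Fin p → ℝ) → ℝ) : Prop :=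
  ∀ᵐ ω ∂μ, ∀ i, (cπ < πs (D.X ω i) ∧ πs (D.X ω i) < 1 - cπ) ∧
    (cπ < πs (D.Xaux ω i) ∧ πs (D.Xaux ω i) < 1 - cπ)

/-- Condition 4 (bounded outcome): `|Y(1)|, |r*(X)| ≤ m_Y` almost surely. -/
def Cond4 (mY : ℝ) (D : Data Ω p n) (rs : (Fin p → ℝ) → ℝ) : Prop :=
  ∀ᵐ ω ∂μ, ∀ i, |D.Y1 ω i| ≤ mY ∧ |rs (D.X ω i)| ≤ mY

/-- Condition 5 (design): intercept, bounded mean-zero sub-Gaussian remaining coordinates,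
full-rank design matrix. -/
def Cond5 (mZ σZ : ℝ) (hp : 0 < p) (D : Data Ω p n) : Prop :=
  (∀ᵐ ω ∂μ, ∀ i, D.X ω i ⟨0, hp⟩ = 1 ∧ ∀ j : Fin p, j ≠ ⟨0, hp⟩ → |D.X ω i j| ≤ mZ) ∧
  (∀ i (j : Fin p), j ≠ ⟨0, hp⟩ → ∫ ω, D.X ω i j ∂μ = 0) ∧
  (∀ᵐ ω ∂μ, (Matrix.of (D.X ω)).rank = min n p) ∧
  (∀ i (u : Fin p → ℝ), u ⟨0, hp⟩ = 0 → l2sq u = 1 →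
    ∀ α : ℝ, ∫ ω, Real.exp (α * dot u (D.X ω i)) ∂μ ≤ Real.exp (α ^ 2 * σZ ^ 2 / 2))

end Conditions2

/-- a monotonically increasing, twice differentiable link with first and second derivatives
uniformly bounded by `m`. -/
def GoodLink (g : ℝ → ℝ) (m : ℝ) : Prop :=
  StrictMono g ∧ (∀ t, DifferentiableAt ℝ g t) ∧ (∀ t, DifferentiableAt ℝ (deriv g) t) ∧
  (∀ t, |deriv g t| ≤ m) ∧ (∀ t, |deriv (deriv g) t| ≤ m)

/-- the PS link takes values approaching `1` at `+∞` and `0` at `-∞`. -/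
def PSLink (φ : ℝ → ℝ) : Prop :=
  Tendsto φ atTop (𝓝 1) ∧ Tendsto φ atBot (𝓝 0)

/-- Condition 9: lower bound on `|φ'|` on compacta. -/
def Cond9 (φ : ℝ → ℝ) : Prop :=
  ∀ u : ℝ, 0 < u → ∃ c : ℝ, 0 < c ∧ ∀ w : ℝ, |w| ≤ u → c ≤ |deriv φ w|

end DCalATE

namespace DCalATE

/-! Overlap `c_π < φ(X^⊤γ*) < 1 - c_π` confines `X^⊤γ*` to a fixed interval `[-A, A]`, since
`φ` tends to `0` and `1` at `∓∞`. The covariates are bounded by `max 1 m_Z` (the auxiliary ones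
because they share the law of the main ones), so `|X^⊤γ̂| ≤ A + max 1 m_Z · ‖γ̂ - γ*‖₁`, and the
`ℓ¹` rate `s_π √(log p / n) ≤ s_π log p / √(n log 2)` tends to zero. Hence `M_γ = A + 1` bounds
every `|X^⊤γ̂|` on the rate event, whose probability tends to one. -/

lemma clamp_eq_self {M t : ℝ} (h : |t| ≤ M) : clamp M t = t := by
  rw [abs_le] at h
  rw [clamp, max_eq_right h.1, min_eq_right h.2]

lemma abs_dot_le_add_mul_l1 {k : ℕ} {x g γ : Fin k → ℝ} {M : ℝ} (hx : ∀ j, |x j| ≤ M) :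
    |dot x g| ≤ |dot x γ| + M * l1 (fun j => g j - γ j) := by
  have hsplit : dot x g = dot x γ + ∑ j, x j * (g j - γ j) := by
    simp only [dot, ← Finset.sum_add_distrib]
    exact Finset.sum_congr rfl fun j _ => by ring
  have hrem : |∑ j, x j * (g j - γ j)| ≤ M * l1 (fun j => g j - γ j) :=
    calc |∑ j, x j * (g j - γ j)| ≤ ∑ j, |x j| * |g j - γ j| := by
          simpa only [abs_mul] using
            Finset.abs_sum_le_sum_abs (fun j => x j * (g j - γ j)) Finset.univ
      _ ≤ ∑ j, M * |g j - γ j| :=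
          Finset.sum_le_sum fun j _ => mul_le_mul_of_nonneg_right (hx j) (abs_nonneg _)
      _ = M * l1 (fun j => g j - γ j) := by rw [l1, Finset.mul_sum]
  rw [hsplit]
  exact (abs_add_le _ _).trans (by linarith)

lemma PSLink.exists_abs_le_of_mem_Ioo {φ : ℝ → ℝ} (hφ : PSLink φ) {c : ℝ} (hc : 0 < c) :
    ∃ A, 0 ≤ A ∧ ∀ w, c < φ w → φ w < 1 - c → |w| ≤ A := by
  obtain ⟨t₂, ht₂⟩ :=
    eventually_atTop.1 (hφ.1.eventually (eventually_gt_nhds (show 1 - c < 1 by linarith)))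
  obtain ⟨t₁, ht₁⟩ := eventually_atBot.1 (hφ.2.eventually (eventually_lt_nhds hc))
  refine ⟨|t₁| + |t₂|, by positivity, fun w hlo hhi => abs_le.2 ⟨?_, ?_⟩⟩
  · have : t₁ < w := lt_of_not_ge fun h => (ht₁ w h).not_gt hlo
    linarith [neg_abs_le t₁, abs_nonneg t₂]
  · have : w < t₂ := lt_of_not_ge fun h => (ht₂ w h).not_gt hhi
    linarith [le_abs_self t₂, abs_nonneg t₁]

lemma sqrt_log_two_mul_sqrt_log_le (k : ℕ) :
    Real.sqrt (Real.log 2) * Real.sqrt (Real.log k) ≤ Real.log k := by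
  rcases Nat.lt_or_ge k 2 with hk | hk
  · interval_cases k <;> simp
  · have h2 : Real.log 2 ≤ Real.log k := Real.log_le_log two_pos (by exact_mod_cast hk)
    calc Real.sqrt (Real.log 2) * Real.sqrt (Real.log k)
        ≤ Real.sqrt (Real.log k) * Real.sqrt (Real.log k) := by gcongr
      _ = Real.log k := Real.mul_self_sqrt (h2.trans' (Real.log_nonneg one_le_two))

lemma tendsto_mul_sqrt_log_div {s p : ℕ → ℕ}
    (h : Tendsto (fun n => (s n : ℝ) * Real.log (p n) / Real.sqrt n) atTop (𝓝 0)) :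
    Tendsto (fun n => (s n : ℝ) * Real.sqrt (Real.log (p n) / n)) atTop (𝓝 0) := by
  have hlog2 : 0 < Real.sqrt (Real.log 2) := Real.sqrt_pos.2 (Real.log_pos one_lt_two)
  refine squeeze_zero (fun n => by positivity) (fun n => ?_)
    (by simpa using h.div_const (Real.sqrt (Real.log 2)))
  rw [Real.sqrt_div' _ (Nat.cast_nonneg n), le_div_iff₀ hlog2, mul_div_assoc, mul_assoc,
    div_mul_eq_mul_div, mul_comm (Real.sqrt _)]
  gcongr
  exact sqrt_log_two_mul_sqrt_log_le _

lemma tendsto_measure_of_eventually_ae_subset {Ω ι : Type*} [MeasurableSpace Ω] {μ : Measure Ω}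
    [IsProbabilityMeasure μ] {l : Filter ι} {R S : ι → Set Ω}
    (hR : Tendsto (fun n => μ (R n)) l (𝓝 1)) (hRS : ∀ᶠ n in l, ∀ᵐ ω ∂μ, ω ∈ R n → ω ∈ S n) :
    Tendsto (fun n => μ (S n)) l (𝓝 1) :=
  tendsto_of_tendsto_of_tendsto_of_le_of_le' hR tendsto_const_nhds
    (hRS.mono fun _ h => measure_mono_ae h) (Eventually.of_forall fun _ => prob_le_one)

lemma ae_abs_covariates_le_max_one {Ω : Type*} [MeasurableSpace Ω] {p n : ℕ}
    {μ : Measure Ω} {mZ σZ : ℝ} {hp : 0 < p} {D : Data Ω p n}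
    {πs rs : (Fin p → ℝ) → ℝ} (hWP : WellPosed μ D πs rs) (hC5 : Cond5 μ mZ σZ hp D) :
    ∀ᵐ ω ∂μ, ∀ i j, |D.X ω i j| ≤ max 1 mZ ∧ |D.Xaux ω i j| ≤ max 1 mZ := by
  have hX : ∀ᵐ ω ∂μ, ∀ i j, |D.X ω i j| ≤ max 1 mZ := hC5.1.mono fun ω h i j => by
    rcases eq_or_ne j ⟨0, hp⟩ with rfl | hj
    · simp [(h i).1]
    · exact ((h i).2 j hj).trans (le_max_right _ _)
  have hB : MeasurableSet {x : Fin p → ℝ | ∀ j, |x j| ≤ max 1 mZ} := by measurability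
  have hXaux : ∀ᵐ ω ∂μ, ∀ i j, |D.Xaux ω i j| ≤ max 1 mZ := ae_all_iff.2 fun i =>
    ((hWP.2.2.2.2.2.1 i i).comp measurable_fst).symm.ae_mem_snd hB (hX.mono fun _ h => h i)
  filter_upwards [hX, hXaux] with ω h h' i j using ⟨h i j, h' i j⟩

theorem trimming_inactive_general
    {Ω : Type*} [MeasurableSpace Ω]
    (μ : Measure Ω) [IsProbabilityMeasure μ]
    (p : ℕ → ℕ) (hp : ∀ n, 0 < p n)
    (D : ∀ n, Data Ω (p n) n)
    (πs rs : ∀ n, (Fin (p n) → ℝ) → ℝ)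
    (φ : ℝ → ℝ) (hφlim : PSLink φ)
    (hWP : ∀ n, WellPosed μ (D n) (πs n) (rs n))
    (cπ : ℝ) (hcπ : 0 < cπ ∧ cπ < 1 / 2)
    (hC2 : ∀ n, Cond2 μ cπ (D n) (πs n))
    (mZ σZ : ℝ) (hC5 : ∀ n, Cond5 μ mZ σZ (hp n) (D n))
    (γstar : ∀ n, Fin (p n) → ℝ) (sπ : ℕ → ℕ)
    (hGLMp : ∀ n x, πs n x = φ (dot x (γstar n)))
    (hratePS : ∃ C : ℝ, Tendsto (fun n => μ {ω |
        l1 (fun j => (D n).ghat ω j - γstar n j)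
          ≤ C * (sπ n : ℝ) * Real.sqrt (Real.log (p n) / (n : ℝ)) ∧
        l2 (fun j => (D n).ghat ω j - γstar n j)
          ≤ C * Real.sqrt ((sπ n : ℝ) * Real.log (p n) / (n : ℝ))}) atTop (𝓝 1))
    (hsπSmall : Tendsto (fun n => (sπ n : ℝ) * Real.log (p n) / Real.sqrt (n : ℝ))
      atTop (𝓝 0))
    :
    ∃ C₀ : ℝ, 0 < C₀ ∧ ∀ Mγ : ℝ, C₀ ≤ Mγ →
      Tendsto (fun n : ℕ => μ {ω | ∀ i,
          (|dot ((D n).X ω i) ((D n).ghat ω)| ≤ Mγ ∧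
            |dot ((D n).Xaux ω i) ((D n).ghat ω)| ≤ Mγ) ∧
          ph φ Mγ (D n) ω i = φ (dot ((D n).X ω i) ((D n).ghat ω)) ∧
          phAux φ Mγ (D n) ω i = φ (dot ((D n).Xaux ω i) ((D n).ghat ω))})
        atTop (𝓝 1) := by
  obtain ⟨C, hrate⟩ := hratePS
  obtain ⟨A, hA0, hA⟩ := hφlim.exists_abs_le_of_mem_Ioo hcπ.1
  refine ⟨A + 1, by linarith, fun Mγ hMγ => tendsto_measure_of_eventually_ae_subset hrate ?_⟩
  have hsmall : ∀ᶠ n in atTop,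
      max 1 mZ * (|C| * ((sπ n : ℝ) * Real.sqrt (Real.log (p n) / n))) ≤ 1 := by
    have := ((tendsto_mul_sqrt_log_div hsπSmall).const_mul |C|).const_mul (max 1 mZ)
    simp only [mul_zero] at this
    exact this.eventually (eventually_le_nhds one_pos)
  filter_upwards [hsmall] with n hn
  filter_upwards [ae_abs_covariates_le_max_one (hWP n) (hC5 n), hC2 n] with ω hX hπ hR i
  have hl1 : max 1 mZ * l1 (fun j => (D n).ghat ω j - γstar n j) ≤ 1 := by
    refine le_trans ?_ hn
    gcongr
    calc _ ≤ C * (sπ n : ℝ) * Real.sqrt (Real.log (p n) / n) := hR.1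
      _ ≤ |C| * ((sπ n : ℝ) * Real.sqrt (Real.log (p n) / n)) := by
        rw [mul_assoc]; gcongr; exact le_abs_self C
  have hfit : ∀ x, (∀ j, |x j| ≤ max 1 mZ) → cπ < πs n x → πs n x < 1 - cπ →
      |dot x ((D n).ghat ω)| ≤ Mγ := by
    intro x hx hlo hhi
    rw [hGLMp] at hlo hhi
    linarith [abs_dot_le_add_mul_l1 (g := (D n).ghat ω) (γ := γstar n) hx, hA _ hlo hhi]
  have hmain := hfit _ (fun j => (hX i j).1) (hπ i).1.1 (hπ i).1.2
  have haux := hfit _ (fun j => (hX i j).2) (hπ i).2.1 (hπ i).2.2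
  exact ⟨⟨hmain, haux⟩, by rw [ph, clamp_eq_self hmain], by rw [phAux, clamp_eq_self haux]⟩

/-- **Lemma (inactive trimming)**: under Conditions 1–2, 4–6 and 8–9 with
`s_π = o(√n / log p)` and `M_γ ≍ 1` sufficiently large, with probability converging to one
`|X_i^⊤γ̂| ≤ M_γ` and `|X_{aux,i}^⊤γ̂| ≤ M_γ` for all `i`, so that the trimming in the PS
estimate is inactive: `π̂_i = φ(X_i^⊤γ̂)` and `π̂_{aux,i} = φ(X_{aux,i}^⊤γ̂)`. -/
theorem trimming_inactive
    {Ω : Type*} [MeasurableSpace Ω] [StandardBorelSpace Ω] [Nonempty Ω]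
    (μ : Measure Ω) [IsProbabilityMeasure μ]
    (p : ℕ → ℕ) (hp : ∀ n, 0 < p n) (hpTop : Tendsto (fun n => p n) atTop atTop)
    (D : ∀ n, Data Ω (p n) n)
    (πs rs : ∀ n, (Fin (p n) → ℝ) → ℝ)
    (ψ φ : ℝ → ℝ) (mψ mφ : ℝ)
    (hψ : GoodLink ψ mψ) (hφ : GoodLink φ mφ) (hφlim : PSLink φ)
    (hWP : ∀ n, WellPosed μ (D n) (πs n) (rs n))
    (hC1 : ∀ n, Unconf μ (D n))
    (cπ : ℝ) (hcπ : 0 < cπ ∧ cπ < 1 / 2)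
    (hC2 : ∀ n, Cond2 μ cπ (D n) (πs n))
    (mY : ℝ) (hC4 : ∀ n, Cond4 μ mY (D n) (rs n))
    (mZ σZ : ℝ) (hC5 : ∀ n, Cond5 μ mZ σZ (hp n) (D n))
    (mr : ℝ)
    (hC6 : Tendsto (fun n => μ {ω | ∀ i, |rh ψ (D n) ω i| ≤ mr ∧ |rhAux ψ (D n) ω i| ≤ mr})
      atTop (𝓝 1))
    (γstar : ∀ n, Fin (p n) → ℝ) (sπ : ℕ → ℕ)
    (hGLMp : ∀ n x, πs n x = φ (dot x (γstar n)))
    (hsπ0 : ∀ n, sparsity (γstar n) = sπ n)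
    (hratePS : ∃ C : ℝ, Tendsto (fun n => μ {ω |
        l1 (fun j => (D n).ghat ω j - γstar n j)
          ≤ C * (sπ n : ℝ) * Real.sqrt (Real.log (p n) / (n : ℝ)) ∧
        l2 (fun j => (D n).ghat ω j - γstar n j)
          ≤ C * Real.sqrt ((sπ n : ℝ) * Real.log (p n) / (n : ℝ))}) atTop (𝓝 1))
    (hC9 : Cond9 φ)
    (hsπSmall : Tendsto (fun n => (sπ n : ℝ) * Real.log (p n) / Real.sqrt (n : ℝ))
      atTop (𝓝 0))
    :
    ∃ C₀ : ℝ, 0 < C₀ ∧ ∀ Mγ : ℝ, C₀ ≤ Mγ →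
      Tendsto (fun n : ℕ => μ {ω | ∀ i,
          (|dot ((D n).X ω i) ((D n).ghat ω)| ≤ Mγ ∧
            |dot ((D n).Xaux ω i) ((D n).ghat ω)| ≤ Mγ) ∧
          ph φ Mγ (D n) ω i = φ (dot ((D n).X ω i) ((D n).ghat ω)) ∧
          phAux φ Mγ (D n) ω i = φ (dot ((D n).Xaux ω i) ((D n).ghat ω))})
        atTop (𝓝 1) :=
  trimming_inactive_general μ p hp D πs rs φ hφlim hWP cπ hcπ hC2 mZ σZ hC5 γstar sπ hGLMp hratePS
    hsπSmall

end DCalATE
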